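/- The fundamental network construction is functorial for composition: Γ_f ∘ Γ_g = Γ_{f ∘_Σ g}, where (Γ_f)_j(X) = f(A_{σⱼ}X) and (f ∘_Σ g)(X) = f(g(A_{σ₁}X),…,g(A_{σₙ}X)). -/

import Mathlib

/-- The map A_{σⱼ} : V^n → V^n, A_{σⱼ}(X)ₖ = X_{σ̃ₖ(j)}. -/
def AM {n : ℕ} {V : Type*} (σt : Fin n → Fin n → Fin n) (j : Fin n)
    (X : Fin n → V) : Fin n → V := fun k => X (σt k j)

/-- The fundamental network map Γ_f : V^n → V^n. -/
def fnet {n : ℕ} {V : Type*} (σt : Fin n → Fin n → Fin n)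
    (f : (Fin n → V) → V) (X : Fin n → V) : Fin n → V :=
  fun j => f (AM σt j X)

/-- The symbolic composition (f ∘_Σ g)(X) = f(g(A_{σ₁}X),…,g(A_{σₙ}X)). -/
def scomp {n : ℕ} {V : Type*} (σt : Fin n → Fin n → Fin n)
    (f g : (Fin n → V) → V) (X : Fin n → V) : V :=
  f (fun j => g (AM σt j X))

/-! Since `σ` is injective and turns `σt` into composition, `σt` is associative; hence
`A_{σₖ} ∘ A_{σⱼ} = A_{σ_{σ̃ₖ(j)}}`, and both sides of the identity evaluate at `X` to
`j ↦ f (k ↦ g (A_{σ_{σ̃ₖ(j)}} X))`. -/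

theorem assoc_of_injective_of_map_eq_comp {ι α : Type*} {σ : ι → α → α}
    (hinj : Function.Injective σ) {σt : ι → ι → ι}
    (hσt : ∀ j k, σ (σt j k) = σ j ∘ σ k) (m k j : ι) :
    σt (σt m k) j = σt m (σt k j) :=
  hinj <| by simp only [hσt, Function.comp_assoc]

theorem AM_AM {n : ℕ} {V : Type*} {σt : Fin n → Fin n → Fin n}
    (hassoc : ∀ m k j, σt (σt m k) j = σt m (σt k j)) (j k : Fin n) (X : Fin n → V) :
    AM σt k (AM σt j X) = AM σt (σt k j) X :=
  funext fun m => congrArg X (hassoc m k j)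

theorem AM_fnet {n : ℕ} {V : Type*} (σt : Fin n → Fin n → Fin n) (g : (Fin n → V) → V)
    (j : Fin n) (X : Fin n → V) :
    AM σt j (fnet σt g X) = fun k => g (AM σt (σt k j) X) :=
  rfl

/-- Γ_f ∘ Γ_g = Γ_{f ∘_Σ g}. -/
theorem stmt14 {N n : ℕ} {V : Type*} (σ : Fin n → Fin N → Fin N)
    (hinj : Function.Injective σ)
    (σt : Fin n → Fin n → Fin n)
    (hσt : ∀ j k : Fin n, σ (σt j k) = σ j ∘ σ k)
    (f g : (Fin n → V) → V) :
    (fnet σt f) ∘ (fnet σt g) = fnet σt (scomp σt f g) := by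
  have hassoc := assoc_of_injective_of_map_eq_comp hinj hσt
  funext X j
  simp only [Function.comp_apply, fnet, AM_fnet, scomp, AM_AM hassoc]
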